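/- Let V be a 4-dimensional vector space over F_q (q odd) with a nondegenerate symmetric bilinear form of minus type, and let L be an elliptic 2-dimensional subspace. Then there are exactly two degenerate 3-dimensional subspaces of V containing L, and their radicals (tangent directions) are distinct isotropic 1-dimensional subspaces. -/

import Mathlib

/-!
As `L` is nondegenerate, `V = L ⊕ L^⊥`, and for `N ≤ L^⊥` the radical of `L ⊔ N` is the radical
of `N`. So the degenerate 3-spaces through `L` are the spaces `L ⊔ ⟨s⟩` with `s` a nonzero
isotropic vector of the plane `L^⊥`, and `⟨s⟩` is their radical. The plane `L^⊥` is nondegenerate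
and isotropic: otherwise `L` and `L^⊥` would be anisotropic planes over a finite field, hence
anti-isometric, and the graph of an anti-isometry `L → L^⊥` would be a totally isotropic plane,
which minus type excludes. In odd characteristic a nondegenerate isotropic plane is hyperbolic,
with exactly two isotropic lines.
-/

open Module

/-- The radical of a subspace `W` with respect to a bilinear form `B`:
`rad(W) = W ∩ W^⊥`. -/
def bilinRadical {F V : Type*} [Field F] [AddCommGroup V] [Module F V]
    (B : LinearMap.BilinForm F V) (W : Submodule F V) : Submodule F V :=
  W ⊓ B.orthogonal W

/-- A subspace `W` is an *elliptic line* for `B` if it is 2-dimensional,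
nondegenerate and anisotropic. -/
def IsEllipticLine {F V : Type*} [Field F] [AddCommGroup V] [Module F V]
    (B : LinearMap.BilinForm F V) (W : Submodule F V) : Prop :=
  finrank F W = 2 ∧ (B.restrict W).Nondegenerate ∧ ∀ v ∈ W, B v v = 0 → v = 0

open Submodule LinearMap.BilinForm

section FiniteField

variable {K : Type*} [Field K] [Fintype K]

open Polynomial in
theorem exists_mul_sq_add_mul_sq_eq (hK : ringChar K ≠ 2) {a b : K} (ha : a ≠ 0) (hb : b ≠ 0)
    (c : K) : ∃ x y : K, a * x ^ 2 + b * y ^ 2 = c := by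
  obtain ⟨x, y, hxy⟩ := FiniteField.exists_root_sum_quadratic
    (f := C a * X ^ 2) (g := C b * X ^ 2 - C c) (degree_C_mul_X_pow 2 ha)
    (by rw [degree_sub_C (by rw [degree_C_mul_X_pow 2 hb]; norm_num)]
        exact degree_C_mul_X_pow 2 hb)
    (FiniteField.odd_card_of_char_ne_two hK)
  refine ⟨x, y, ?_⟩
  simp only [eval_sub, eval_mul, eval_C, eval_pow, eval_X] at hxy
  linear_combination hxy

theorem isSquare_mul_of_not_isSquare {a b : K} (ha : ¬IsSquare a) (hb : ¬IsSquare b) :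
    IsSquare (a * b) := by
  classical
  have ha0 : a ≠ 0 := by rintro rfl; exact ha IsSquare.zero
  have hb0 : b ≠ 0 := by rintro rfl; exact hb IsSquare.zero
  rw [← quadraticChar_neg_one_iff_not_isSquare] at ha hb
  rw [← quadraticChar_one_iff_isSquare (mul_ne_zero ha0 hb0), map_mul, ha, hb, neg_one_mul, neg_neg]

theorem ringChar_ne_two_of_odd_card (h : Odd (Fintype.card K)) : ringChar K ≠ 2 := fun h2 =>
  Nat.not_even_iff_odd.mpr h (Nat.even_iff.mpr (FiniteField.even_card_iff_char_two.mp h2))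

end FiniteField

section BilinForm

variable {K V : Type*} [Field K] [AddCommGroup V] [Module K V] {B : LinearMap.BilinForm K V}

theorem apply_eq_zero_of_mem_span {s : Set V} (hs : ∀ x ∈ s, ∀ y ∈ s, B x y = 0) {u v : V}
    (hu : u ∈ span K s) (hv : v ∈ span K s) : B u v = 0 := by
  have hv' : ∀ x ∈ s, v ∈ LinearMap.ker (B x) := fun x hx =>
    span_le.mpr (fun y hy => hs x hx y hy) hv
  exact span_le (p := LinearMap.ker (B.flip v)).mpr hv' hu

theorem finrank_span_pair_of_apply {x y a b : V} (hax : B a x ≠ 0) (hay : B a y = 0)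
    (hbx : B b x = 0) (hby : B b y ≠ 0) : finrank K (span K {x, y}) = 2 := by
  have hind : LinearIndependent K ![x, y] := by
    refine LinearIndependent.pair_iff.mpr fun s t hst => ⟨?_, ?_⟩
    · simpa [hay, hax] using congrArg (B a) hst
    · simpa [hbx, hby] using congrArg (B b) hst
  rw [← Matrix.range_cons_cons_empty x y ![], finrank_span_eq_card hind, Fintype.card_fin]

theorem exists_ne_zero_mem_apply_eq_zero [FiniteDimensional K V] {W : Submodule K V}
    (hW : 2 ≤ finrank K W) (x : V) : ∃ y ∈ W, y ≠ 0 ∧ B x y = 0 := by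
  have hker : LinearMap.ker ((B x).domRestrict W) ≠ ⊥ :=
    LinearMap.ker_ne_bot_of_finrank_lt (by rw [finrank_self]; omega)
  obtain ⟨y, hy, hy0⟩ := exists_mem_ne_zero_of_ne_bot hker
  exact ⟨y, y.2, by simpa using hy0, hy⟩

theorem not_isSquare_neg_mul_of_anisotropic (hB : B.IsSymm) {W : Submodule K V}
    (hW : ∀ v ∈ W, B v v = 0 → v = 0) {x y : V} (hx : x ∈ W) (hy : y ∈ W) (hx0 : x ≠ 0)
    (hy0 : y ≠ 0) (hxy : B x y = 0) : ¬IsSquare (-(B x x * B y y)) := by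
  rintro ⟨s, hs⟩
  have hxx : B x x ≠ 0 := fun h => hx0 (hW x hx h)
  set t := s / B x x
  have hyx : B y x = 0 := by rw [hB.eq]; exact hxy
  have hiso : B (t • x + y) (t • x + y) = 0 := by
    simp only [map_add, map_smul, LinearMap.add_apply, LinearMap.smul_apply, smul_eq_mul, hxy,
      hyx, t]
    field_simp
    linear_combination -hs
  have hzero := hW _ (W.add_mem (W.smul_mem t hx) hy) hiso
  have ht : t = 0 := by simpa [hxy, hxx] using congrArg (B x) hzero
  exact hy0 (by simpa [ht] using hzero)

theorem exists_mem_apply_self_eq_of_anisotropic [Fintype K] (hK : ringChar K ≠ 2)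
    [FiniteDimensional K V] (hB : B.IsSymm) {W : Submodule K V} (hW2 : 2 ≤ finrank K W)
    (hW : ∀ v ∈ W, B v v = 0 → v = 0) (c : K) : ∃ u ∈ W, B u u = c := by
  obtain ⟨x, hx, hx0⟩ := exists_mem_ne_zero_of_ne_bot (p := W) (by rintro rfl; simp at hW2)
  obtain ⟨y, hy, hy0, hxy⟩ := exists_ne_zero_mem_apply_eq_zero (B := B) hW2 x
  obtain ⟨s, t, hst⟩ := exists_mul_sq_add_mul_sq_eq hK (fun h => hx0 (hW x hx h))
    (fun h => hy0 (hW y hy h)) c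
  refine ⟨s • x + t • y, W.add_mem (W.smul_mem s hx) (W.smul_mem t hy), ?_⟩
  have hyx : B y x = 0 := by rw [hB.eq]; exact hxy
  simp only [map_add, map_smul, LinearMap.add_apply, LinearMap.smul_apply, smul_eq_mul, hxy, hyx]
  linear_combination hst

theorem apply_add_add_of_mem_orthogonal (hB : B.IsRefl) {L : Submodule K V} {l₁ l₂ m₁ m₂ : V}
    (hl₁ : l₁ ∈ L) (hl₂ : l₂ ∈ L) (hm₁ : m₁ ∈ B.orthogonal L) (hm₂ : m₂ ∈ B.orthogonal L) :
    B (l₁ + m₁) (l₂ + m₂) = B l₁ l₂ + B m₁ m₂ := by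
  have h₁₂ : B l₁ m₂ = 0 := hm₂ l₁ hl₁
  have h₂₁ : B m₁ l₂ = 0 := hB _ _ (hm₁ l₂ hl₂)
  simp only [map_add, LinearMap.add_apply, h₁₂, h₂₁]
  ring

theorem exists_isotropic_plane_of_neg_apply_self (hB : B.IsSymm) {L : Submodule K V}
    {e₁ e₂ u w : V} (he₁ : e₁ ∈ L) (he₂ : e₂ ∈ L) (hu : u ∈ B.orthogonal L)
    (hw : w ∈ B.orthogonal L) (he₁₂ : B e₁ e₂ = 0) (huw : B u w = 0) (he₁₁ : B e₁ e₁ ≠ 0)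
    (he₂₂ : B e₂ e₂ ≠ 0) (huu : B u u = -B e₁ e₁) (hww : B w w = -B e₂ e₂) :
    ∃ U : Submodule K V, finrank K U = 2 ∧ ∀ x ∈ U, ∀ y ∈ U, B x y = 0 := by
  have he₂₁ : B e₂ e₁ = 0 := by rw [hB.eq]; exact he₁₂
  have hwu : B w u = 0 := by rw [hB.eq]; exact huw
  refine ⟨span K {e₁ + u, e₂ + w}, finrank_span_pair_of_apply (B := B) (a := e₁) (b := e₂)
    ?_ ?_ ?_ ?_, fun x hx y hy => apply_eq_zero_of_mem_span ?_ hx hy⟩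
  · rwa [map_add, (hu e₁ he₁ : B e₁ u = 0), add_zero]
  · rw [map_add, he₁₂, (hw e₁ he₁ : B e₁ w = 0), add_zero]
  · rw [map_add, he₂₁, (hu e₂ he₂ : B e₂ u = 0), add_zero]
  · rwa [map_add, (hw e₂ he₂ : B e₂ w = 0), add_zero]
  · simp only [Set.mem_insert_iff, Set.mem_singleton_iff]
    rintro x (rfl | rfl) y (rfl | rfl)
    · rw [apply_add_add_of_mem_orthogonal hB.isRefl he₁ he₁ hu hu, huu, add_neg_cancel]
    · rw [apply_add_add_of_mem_orthogonal hB.isRefl he₁ he₂ hu hw, he₁₂, huw, add_zero]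
    · rw [apply_add_add_of_mem_orthogonal hB.isRefl he₂ he₁ hw hu, he₂₁, hwu, add_zero]
    · rw [apply_add_add_of_mem_orthogonal hB.isRefl he₂ he₂ hw hw, hww, add_neg_cancel]

theorem exists_isotropic_plane_of_anisotropic [Fintype K] (hK : ringChar K ≠ 2)
    [FiniteDimensional K V] (hB : B.IsSymm) {L M : Submodule K V}
    (hL2 : 2 ≤ finrank K L) (hL : ∀ v ∈ L, B v v = 0 → v = 0)
    (hM2 : 2 ≤ finrank K M) (hM : ∀ v ∈ M, B v v = 0 → v = 0) (hLM : M ≤ B.orthogonal L) :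
    ∃ U : Submodule K V, finrank K U = 2 ∧ ∀ u ∈ U, ∀ v ∈ U, B u v = 0 := by
  obtain ⟨e₁, he₁, he₁0⟩ := exists_mem_ne_zero_of_ne_bot (p := L) (by rintro rfl; simp at hL2)
  obtain ⟨e₂, he₂, he₂0, he₁₂⟩ := exists_ne_zero_mem_apply_eq_zero (B := B) hL2 e₁
  have he₁₁ : B e₁ e₁ ≠ 0 := fun h => he₁0 (hL e₁ he₁ h)
  obtain ⟨u, hu, huu⟩ := exists_mem_apply_self_eq_of_anisotropic hK hB hM2 hM (-B e₁ e₁)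
  have hu0 : u ≠ 0 := ne_zero_of_not_isOrtho_self u (by rw [huu]; exact neg_ne_zero.mpr he₁₁)
  obtain ⟨v, hv, hv0, huv⟩ := exists_ne_zero_mem_apply_eq_zero (B := B) hM2 u
  have hvv : B v v ≠ 0 := fun h => hv0 (hM v hv h)
  -- Two anisotropic planes have the same discriminant up to squares, so `v` can be rescaled to
  -- make `e₁ ↦ u, e₂ ↦ c • v` an anti-isometry `L → M`.
  obtain ⟨s, hs⟩ := isSquare_mul_of_not_isSquare
    (not_isSquare_neg_mul_of_anisotropic hB hL he₁ he₂ he₁0 he₂0 he₁₂)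
    (not_isSquare_neg_mul_of_anisotropic hB hM hu hv hu0 hv0 huv)
  set c := s / (B e₁ e₁ * B v v)
  refine exists_isotropic_plane_of_neg_apply_self hB he₁ he₂ (hLM hu) (hLM (M.smul_mem c hv))
    he₁₂ (by simp [huv]) he₁₁ (fun h => he₂0 (hL e₂ he₂ h)) huu ?_
  simp only [c, map_smul, LinearMap.smul_apply, smul_eq_mul, huu] at hs ⊢
  field_simp
  linear_combination -hs

theorem restrict_nondegenerate_iff_bilinRadical_eq_bot [FiniteDimensional K V] (hB : B.IsRefl)
    {W : Submodule K V} : (B.restrict W).Nondegenerate ↔ bilinRadical B W = ⊥ :=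
  (restrict_nondegenerate_iff_isCompl_orthogonal hB).trans
    ((isCompl_orthogonal_iff_disjoint hB).trans disjoint_iff)

theorem bilinRadical_sup_of_le_orthogonal {L N : Submodule K V} (hL : bilinRadical B L = ⊥)
    (hN : N ≤ B.orthogonal L) : bilinRadical B (L ⊔ N) = bilinRadical B N := by
  apply le_antisymm
  · rintro x ⟨hx, hxo⟩
    obtain ⟨l, hl, n, hn, rfl⟩ := mem_sup.mp hx
    have hlL : l ∈ bilinRadical B L := by
      refine ⟨hl, fun l' hl' => ?_⟩
      have h := hxo l' (mem_sup_left hl')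
      rwa [map_add, (hN hn l' hl' : B l' n = 0), add_zero] at h
    rw [hL, mem_bot] at hlL
    subst hlL
    rw [zero_add] at hxo ⊢
    exact ⟨hn, fun n' hn' => hxo n' (mem_sup_right hn')⟩
  · rintro x ⟨hx, hxo⟩
    refine ⟨mem_sup_right hx, fun y hy => ?_⟩
    obtain ⟨l, hl, n, hn, rfl⟩ := mem_sup.mp hy
    rw [LinearMap.map_add₂, (hN hx l hl : B l x = 0), (hxo n hn : B n x = 0), add_zero]

theorem bilinRadical_span_singleton {s : V} (hss : B s s = 0) : bilinRadical B (K ∙ s) = K ∙ s :=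
  inf_eq_left.mpr fun _ hx _ hy => apply_eq_zero_of_mem_span (by simpa) hy hx

theorem notMem_of_mem_orthogonal {L : Submodule K V} (hL : bilinRadical B L = ⊥) {s : V}
    (hs : s ∈ B.orthogonal L) (hs0 : s ≠ 0) : s ∉ L := fun h =>
  hs0 (by rw [← mem_bot K, ← hL]; exact ⟨h, hs⟩)

theorem bilinRadical_sup_span_singleton {L : Submodule K V} (hL : bilinRadical B L = ⊥) {s : V}
    (hs : s ∈ B.orthogonal L) (hss : B s s = 0) : bilinRadical B (L ⊔ K ∙ s) = K ∙ s := by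
  rw [bilinRadical_sup_of_le_orthogonal hL (span_singleton_le_iff_mem _ _ |>.mpr hs),
    bilinRadical_span_singleton hss]

theorem restrict_nondegenerate_orthogonal [FiniteDimensional K V] (hB : B.Nondegenerate)
    (hB' : B.IsRefl) {W : Submodule K V} (hW : (B.restrict W).Nondegenerate) :
    (B.restrict (B.orthogonal W)).Nondegenerate := by
  rw [restrict_nondegenerate_iff_bilinRadical_eq_bot hB', bilinRadical,
    orthogonal_orthogonal hB hB', inf_comm, ← bilinRadical,
    ← restrict_nondegenerate_iff_bilinRadical_eq_bot hB']
  exact hW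

theorem setOf_degenerate_of_le_eq_image [FiniteDimensional K V] (hB : B.IsRefl)
    {L : Submodule K V} (hL : (B.restrict L).Nondegenerate) :
    {W : Submodule K V | L ≤ W ∧ finrank K W = finrank K L + 1 ∧ ¬(B.restrict W).Nondegenerate} =
      (fun s => L ⊔ K ∙ s) '' {s | s ∈ B.orthogonal L ∧ s ≠ 0 ∧ B s s = 0} := by
  have hLrad := (restrict_nondegenerate_iff_bilinRadical_eq_bot hB).mp hL
  ext W
  constructor
  · rintro ⟨hLW, hW, hdeg⟩
    have hWN : W = L ⊔ B.orthogonal L ⊓ W := by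
      rw [← sup_inf_assoc_of_le _ hLW,
        (isCompl_orthogonal_of_restrict_nondegenerate hB hL).sup_eq_top, top_inf_eq]
    rw [restrict_nondegenerate_iff_bilinRadical_eq_bot hB, hWN,
      bilinRadical_sup_of_le_orthogonal hLrad inf_le_left] at hdeg
    obtain ⟨s, ⟨⟨hsL, hsW⟩, hs⟩, hs0⟩ := exists_mem_ne_zero_of_ne_bot hdeg
    refine ⟨s, ⟨hsL, hs0, hs s ⟨hsL, hsW⟩⟩, eq_of_le_of_finrank_eq ?_ ?_⟩
    · exact sup_le hLW ((span_singleton_le_iff_mem _ _).mpr hsW)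
    · rw [finrank_sup_span_singleton (notMem_of_mem_orthogonal hLrad hsL hs0), hW]
  · rintro ⟨s, ⟨hs, hs0, hss⟩, rfl⟩
    refine ⟨le_sup_left, finrank_sup_span_singleton (notMem_of_mem_orthogonal hLrad hs hs0), ?_⟩
    rw [restrict_nondegenerate_iff_bilinRadical_eq_bot hB,
      bilinRadical_sup_span_singleton hLrad hs hss, span_singleton_eq_bot]
    exact hs0

theorem exists_isotropic_apply_eq_one (h2 : (2 : K) ≠ 0) (hB : B.IsSymm) {M : Submodule K V}
    (hM : (B.restrict M).Nondegenerate) {r : V} (hr : r ∈ M) (hr0 : r ≠ 0) (hrr : B r r = 0) :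
    ∃ r' ∈ M, B r' r' = 0 ∧ B r r' = 1 := by
  obtain ⟨w, hw, hrw⟩ : ∃ w ∈ M, B r w ≠ 0 := by
    by_contra! h
    exact hr0 (congrArg Subtype.val (hM.1 ⟨r, hr⟩ fun y => h y y.2))
  refine ⟨(B r w)⁻¹ • w - ((B r w)⁻¹ ^ 2 * B w w / 2) • r,
    M.sub_mem (M.smul_mem _ hw) (M.smul_mem _ hr), ?_, ?_⟩
  · simp only [map_sub, map_smul, LinearMap.sub_apply, LinearMap.smul_apply, smul_eq_mul, hrr,
      hB.eq w r]
    field_simp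
    ring
  · simp only [map_sub, map_smul, smul_eq_mul, hrr]
    field_simp
    ring

theorem span_singleton_eq_or_of_isotropic (h2 : (2 : K) ≠ 0) (hB : B.IsSymm) {r r' : V}
    (hrr : B r r = 0) (hr'r' : B r' r' = 0) (hrr' : B r r' ≠ 0) {v : V}
    (hv : v ∈ span K {r, r'}) (hv0 : v ≠ 0) (hvv : B v v = 0) :
    K ∙ v = K ∙ r ∨ K ∙ v = K ∙ r' := by
  obtain ⟨a, b, rfl⟩ := mem_span_pair.mp hv
  have hab : a * b = 0 := by
    have h : B (a • r + b • r') (a • r + b • r') = 2 * (a * b) * B r r' := by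
      simp only [map_add, map_smul, LinearMap.add_apply, LinearMap.smul_apply, smul_eq_mul, hrr,
        hr'r', hB.eq r' r]
      ring
    rw [h] at hvv
    exact (mul_eq_zero.mp ((mul_eq_zero.mp hvv).resolve_right hrr')).resolve_left h2
  rcases mul_eq_zero.mp hab with rfl | rfl
  · rw [zero_smul, zero_add] at hv0 ⊢
    exact Or.inr (span_singleton_smul_eq (left_ne_zero_of_smul hv0).isUnit r')
  · rw [zero_smul, add_zero] at hv0 ⊢
    exact Or.inl (span_singleton_smul_eq (left_ne_zero_of_smul hv0).isUnit r)

theorem exists_isotropic_lines [FiniteDimensional K V] (h2 : (2 : K) ≠ 0) (hB : B.IsSymm)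
    {M : Submodule K V} (hM2 : finrank K M = 2) (hM : (B.restrict M).Nondegenerate) {r : V}
    (hr : r ∈ M) (hr0 : r ≠ 0) (hrr : B r r = 0) :
    ∃ r' ∈ M, r' ≠ 0 ∧ B r' r' = 0 ∧ K ∙ r ≠ K ∙ r' ∧
      ∀ v ∈ M, v ≠ 0 → B v v = 0 → K ∙ v = K ∙ r ∨ K ∙ v = K ∙ r' := by
  obtain ⟨r', hr', hr'r', hrr'⟩ := exists_isotropic_apply_eq_one h2 hB hM hr hr0 hrr
  have hspan : span K {r, r'} = M := by
    refine eq_of_le_of_finrank_eq (span_le.mpr (Set.insert_subset hr (by simpa))) ?_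
    rw [hM2, finrank_span_pair_of_apply (B := B) (a := r') (b := r) _ hr'r' hrr] <;>
      simp [hB.eq r' r, hrr']
  have hr'0 : r' ≠ 0 := by rintro rfl; simp at hrr'
  have hne : K ∙ r ≠ K ∙ r' := fun h => one_ne_zero <| hrr' ▸
    apply_eq_zero_of_mem_span (by simpa) (mem_span_singleton_self r)
      (h ▸ mem_span_singleton_self r')
  refine ⟨r', hr', hr'0, hr'r', hne, fun v hv => ?_⟩
  rw [← hspan] at hv
  exact span_singleton_eq_or_of_isotropic h2 hB hrr hr'r' (by simp [hrr']) hv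

end BilinForm

/-- Let `V` be 4-dimensional over `F_q` (`q` odd) with a nondegenerate symmetric
bilinear form of minus type (Witt index 1, i.e. no totally isotropic 2-dimensional
subspace), and let `L` be an elliptic line.  Then there are exactly two degenerate
3-dimensional subspaces of `V` containing `L`, and their radicals are distinct
isotropic 1-dimensional subspaces. -/
theorem two_degenerate_three_spaces_through_elliptic_line
    {F V : Type*} [Field F] [Fintype F] [AddCommGroup V] [Module F V]
    (q : ℕ) (hq : Fintype.card F = q) (hodd : Odd q)
    (hdim : finrank F V = 4)
    (B : LinearMap.BilinForm F V) (hsymm : B.IsSymm) (hB : B.Nondegenerate)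
    (hminus : ¬ ∃ U : Submodule F V, finrank F U = 2 ∧ ∀ u ∈ U, ∀ v ∈ U, B u v = 0)
    (L : Submodule F V) (hL : IsEllipticLine B L) :
    ∃ W₁ W₂ : Submodule F V, W₁ ≠ W₂ ∧
      {W : Submodule F V | L ≤ W ∧ finrank F W = 3 ∧ ¬ (B.restrict W).Nondegenerate}
        = {W₁, W₂} ∧
      bilinRadical B W₁ ≠ bilinRadical B W₂ ∧
      (∀ W ∈ ({W₁, W₂} : Set (Submodule F V)),
        finrank F (bilinRadical B W) = 1 ∧ ∀ v ∈ bilinRadical B W, B v v = 0) := by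
  have hF := ringChar_ne_two_of_odd_card (hq ▸ hodd)
  have : FiniteDimensional F V := Module.finite_of_finrank_pos (by omega)
  obtain ⟨hL2, hLnd, hLaniso⟩ := hL
  have hLrad := (restrict_nondegenerate_iff_bilinRadical_eq_bot hsymm.isRefl).mp hLnd
  have hM2 : finrank F (B.orthogonal L) = 2 := by rw [finrank_orthogonal hB, hdim, hL2]
  obtain ⟨r, hr, hr0, hrr⟩ : ∃ r ∈ B.orthogonal L, r ≠ 0 ∧ B r r = 0 := by
    by_contra! hM
    exact hminus (exists_isotropic_plane_of_anisotropic hF hsymm hL2.ge hLaniso hM2.ge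
      (fun v hv hvv => by_contra fun hv0 => hM v hv hv0 hvv) le_rfl)
  obtain ⟨r', hr', hr'0, hr'r', hne, hlines⟩ := exists_isotropic_lines (Ring.two_ne_zero hF)
    hsymm hM2 (restrict_nondegenerate_orthogonal hB hsymm.isRefl hLnd) hr hr0 hrr
  have hrad := bilinRadical_sup_span_singleton hLrad hr hrr
  have hrad' := bilinRadical_sup_span_singleton hLrad hr' hr'r'
  have hradne : bilinRadical B (L ⊔ F ∙ r) ≠ bilinRadical B (L ⊔ F ∙ r') := by
    rwa [hrad, hrad']
  refine ⟨L ⊔ F ∙ r, L ⊔ F ∙ r', fun h => hradne (congrArg _ h), ?_, hradne, ?_⟩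
  · rw [show 3 = finrank F L + 1 by omega, setOf_degenerate_of_le_eq_image hsymm.isRefl hLnd]
    ext W
    constructor
    · rintro ⟨s, ⟨hs, hs0, hss⟩, rfl⟩
      rcases hlines s hs hs0 hss with h | h <;> simp [h]
    · rintro (rfl | rfl)
      exacts [⟨r, ⟨hr, hr0, hrr⟩, rfl⟩, ⟨r', ⟨hr', hr'0, hr'r'⟩, rfl⟩]
  · rintro W (rfl | rfl)
    · rw [hrad]
      exact ⟨finrank_span_singleton hr0, fun v hv => apply_eq_zero_of_mem_span (by simpa) hv hv⟩
    · rw [hrad']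
      exact ⟨finrank_span_singleton hr'0, fun v hv => apply_eq_zero_of_mem_span (by simpa) hv hv⟩
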